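/- Let 𝒜 be an n×d real matrix with n ≥ d, suppose the identity injection (j ↦ j for j = 1,…,d) is an optimal assignment of 𝒜, and let ℳ = 𝒜([1,…,d],[1,…,d]) be the top d×d block of 𝒜. Then the max-plus statistical leverage scores of 𝒜 satisfy: p_i(𝒜) = 0 for i = 1,…,d, and p_i(𝒜) = 2 · max_{j=1,…,d} (𝒜 ⊗ ℳ^{⊗−1})_{ij} = 2 · max_{j,k ∈ {1,…,d}} ( 𝒜_{ik} + (ℳ^{⊗−1})_{kj} ) for i = d+1,…,n. -/

import Mathlib

open scoped BigOperators

/-- The set `G(n,d)` of *good coefficient matrices*: `C` is good if for every nonempty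
set `Ψ` of permutations of `{1,…,d}` and every injection `φ : {1,…,d} ↪ {1,…,n}`,
the signed sum `∑_{π∈Ψ} sign(π) ∏_k C_{φ(k),π(k)}` is nonzero. -/
def Good {n d : ℕ} (C : Matrix (Fin n) (Fin d) ℂ) : Prop :=
  ∀ Ψ : Finset (Equiv.Perm (Fin d)), Ψ.Nonempty → ∀ φ : Fin d ↪ Fin n,
    ∑ π ∈ Ψ, ((Equiv.Perm.sign π : ℤ) : ℂ) * ∏ k, C (φ k) (π k) ≠ 0

/-- Max-plus permanent of a rectangular real matrix (rows indexed by `κ`, columns by `ι`):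
the maximum over injections `φ` of the columns into the rows of `∑ j, A (φ j) j`. -/
noncomputable def mpPerm {ι κ : Type*} [Fintype ι] [Fintype κ] (A : Matrix κ ι ℝ) : ℝ :=
  ⨆ φ : ι ↪ κ, ∑ j, A (φ j) j

/-- The `i`-obligated max-plus permanent: maximum over injections whose image contains `i`. -/
noncomputable def mpPermOb {ι κ : Type*} [Fintype ι] [Fintype κ] (A : Matrix κ ι ℝ) (i : κ) : ℝ :=
  ⨆ φ : {φ : ι ↪ κ // ∃ j, φ j = i}, ∑ j, A (φ.1 j) j

/-- The set of optimal assignments of a max-plus matrix. -/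
def oas {ι κ : Type*} [Fintype ι] [Fintype κ] (A : Matrix κ ι ℝ) : Set (ι ↪ κ) :=
  {φ | ∑ j, A (φ j) j = mpPerm A}

/-- The max-plus permanent of a square matrix with row `r` and column `c` deleted. -/
noncomputable def mpPermDel {d : ℕ} (M : Matrix (Fin d) (Fin d) ℝ) (r c : Fin d) : ℝ :=
  mpPerm (M.submatrix (fun i : {i : Fin d // i ≠ r} => (i : Fin d))
                      (fun j : {j : Fin d // j ≠ c} => (j : Fin d)))

/-- The max-plus inverse of a square matrix:
`(M^{⊗-1})_{ij} = perm(M with row j and column i deleted) - perm(M)`. -/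
noncomputable def mpInv {d : ℕ} (M : Matrix (Fin d) (Fin d) ℝ) : Matrix (Fin d) (Fin d) ℝ :=
  fun i j => mpPermDel M j i - mpPerm M

/-- Max-plus statistical leverage scores: `p_i(A) = 2 (perm(A,i) - perm(A))`. -/
noncomputable def mpScore {n d : ℕ} (A : Matrix (Fin n) (Fin d) ℝ) (i : Fin n) : ℝ :=
  2 * (mpPermOb A i - mpPerm A)

/-- Statistical leverage scores of a complex matrix:
`p_i(A) = sup_{x, Ax ≠ 0} |(Ax)_i|² / ‖Ax‖₂²` (and `0` if the sup is over the empty set). -/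
noncomputable def levScore {n d : ℕ} (A : Matrix (Fin n) (Fin d) ℂ) (i : Fin n) : ℝ :=
  sSup {t : ℝ | ∃ x : Fin d → ℂ, A.mulVec x ≠ 0 ∧
    t = ‖A.mulVec x i‖ ^ 2 / ∑ k, ‖A.mulVec x k‖ ^ 2}


/-!
Let `σ` be an optimal assignment and `φ` an assignment sending column `k` to a row `i` outside
the image of `σ`. Whenever another column `c` of `φ` also lands outside the image of `σ`, follow
the alternating path of `σ` and `φ` that ends in the row `φ c` and swap `σ` and `φ` along it.
The swapped pair are again assignments of the same total weight, and the one built on `φ`'s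
side of the path weighs at most `σ`, so the other one weighs at least `φ`; it still sends `k`
to `i` and has one fewer column outside the image of `σ`. Hence an optimal `i`-obligated
assignment sends `k` to `i` and the other `d - 1` columns into the top block `ℳ`, missing one
row `j` of it; it is thus `𝒜_{ik}` plus an assignment of `ℳ` with row `j` and column `k`
deleted. Subtracting `perm 𝒜 = perm ℳ` turns these deleted permanents into entries of
`ℳ^{⊗-1}`.
-/

open Function

section Embedding

variable {ι κ : Type*}

theorem Set.injective_piecewise_of_iff {f g : ι → κ} (hf : Injective f) (hg : Injective g)
    (s : Set ι) [∀ j, Decidable (j ∈ s)] (hs : ∀ j j', g j = f j' → (j ∈ s ↔ j' ∈ s)) :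
    Injective (s.piecewise f g) :=
  (s.injective_piecewise_iff).2 ⟨hf.injOn, hg.injOn, fun x hx y hy h => hy ((hs y x h.symm).2 hx)⟩

/-- The columns of the alternating path of `σ` and `φ` that ends in the row `φ c`. -/
theorem exists_alternating_set (σ φ : ι ↪ κ) {c : ι} (hc : φ c ∉ Set.range σ) :
    ∃ s : Set ι, c ∈ s ∧ (∀ j j', φ j = σ j' → (j ∈ s ↔ j' ∈ s)) ∧
      ∀ j ∈ s, φ j ∉ Set.range σ → j = c := by
  let F : κ → κ := extend σ φ id
  have hF : ∀ j, F (σ j) = φ j := σ.injective.extend_apply φ id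
  have hFix : ∀ x ∉ Set.range σ, F x = x := fun x hx => extend_apply' φ id x hx
  refine ⟨{j | ∃ m, F^[m] (σ j) = φ c}, ⟨1, hF c⟩, fun j j' h => ⟨?_, ?_⟩, ?_⟩
  · rintro ⟨_ | m, hm⟩
    · exact absurd ⟨j, hm⟩ hc
    · rw [iterate_succ_apply, hF, h] at hm
      exact ⟨m, hm⟩
  · rintro ⟨m, hm⟩
    exact ⟨m + 1, by rw [iterate_succ_apply, hF, h, hm]⟩
  · rintro j ⟨_ | m, hm⟩ hj
    · exact absurd ⟨j, hm⟩ hc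
    · rw [iterate_succ_apply, hF, iterate_fixed (hFix _ hj)] at hm
      exact φ.injective hm

end Embedding

section Assignment

variable {ι κ : Type*} [Fintype ι] [Fintype κ] (A : Matrix κ ι ℝ)

theorem sum_le_mpPerm (φ : ι ↪ κ) : ∑ j, A (φ j) j ≤ mpPerm A :=
  le_ciSup (f := fun φ : ι ↪ κ => ∑ j, A (φ j) j) (Set.finite_range _).bddAbove φ

theorem sum_le_mpPermOb {i : κ} (φ : ι ↪ κ) (hφ : ∃ j, φ j = i) :
    ∑ j, A (φ j) j ≤ mpPermOb A i :=
  le_ciSup (f := fun φ : {φ : ι ↪ κ // ∃ j, φ j = i} => ∑ j, A (φ.1 j) j)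
    (Set.finite_range _).bddAbove ⟨φ, hφ⟩

theorem exists_mem_oas [Nonempty (ι ↪ κ)] : ∃ φ, φ ∈ oas A :=
  exists_eq_ciSup_of_finite

theorem mpPermOb_eq_mpPerm {σ : ι ↪ κ} (hσ : σ ∈ oas A) {i : κ} (hi : i ∈ Set.range σ) :
    mpPermOb A i = mpPerm A := by
  have : Nonempty {φ : ι ↪ κ // ∃ j, φ j = i} := ⟨⟨σ, hi⟩⟩
  refine le_antisymm (ciSup_le fun φ => sum_le_mpPerm A φ.1) ?_
  rw [← hσ]
  exact sum_le_mpPermOb A σ hi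

theorem mpPerm_submatrix_le {κ' : Type*} [Fintype κ'] [Nonempty (ι ↪ κ')] (e : κ' ↪ κ) :
    mpPerm (A.submatrix e id) ≤ mpPerm A :=
  ciSup_le fun φ => sum_le_mpPerm A (φ.trans e)

variable {A}

theorem exists_sum_le_sum_piecewise {σ : ι ↪ κ} (hσ : σ ∈ oas A) (φ : ι ↪ κ) (s : Set ι)
    [∀ j, Decidable (j ∈ s)] (hs : ∀ j j', φ j = σ j' → (j ∈ s ↔ j' ∈ s)) :
    ∃ ψ : ι ↪ κ, ⇑ψ = s.piecewise σ φ ∧ ∑ j, A (φ j) j ≤ ∑ j, A (ψ j) j := by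
  let ψ : ι ↪ κ := ⟨s.piecewise σ φ, Set.injective_piecewise_of_iff σ.injective φ.injective s hs⟩
  let χ : ι ↪ κ := ⟨s.piecewise φ σ, Set.injective_piecewise_of_iff φ.injective σ.injective s
    fun j j' h => (hs j' j h.symm).symm⟩
  have hχ : ∑ j, A (χ j) j ≤ ∑ j, A (σ j) j := hσ ▸ sum_le_mpPerm A χ
  have hswap : ∑ j, A (ψ j) j + ∑ j, A (χ j) j = ∑ j, A (σ j) j + ∑ j, A (φ j) j := by
    simp only [← Finset.sum_add_distrib]
    refine Finset.sum_congr rfl fun j _ => ?_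
    by_cases hj : j ∈ s <;> simp [ψ, χ, hj, add_comm]
  exact ⟨ψ, rfl, by linarith⟩

theorem exists_exchange {σ : ι ↪ κ} (hσ : σ ∈ oas A) (φ : ι ↪ κ) {c : ι}
    (hc : φ c ∉ Set.range σ) :
    ∃ ψ : ι ↪ κ, ∑ j, A (φ j) j ≤ ∑ j, A (ψ j) j ∧
      (∀ j, ψ j ∉ Set.range σ → j ≠ c ∧ ψ j = φ j) ∧
      ∀ j, j ≠ c → φ j ∉ Set.range σ → ψ j = φ j := by
  classical
  obtain ⟨s, hcs, hs, hpath⟩ := exists_alternating_set σ φ hc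
  obtain ⟨ψ, hψ, hsum⟩ := exists_sum_le_sum_piecewise hσ φ s hs
  refine ⟨ψ, hsum, fun j hj => ?_, fun j hjc hj => ?_⟩
  · by_cases hjs : j ∈ s
    · exact absurd ⟨j, by simp [hψ, hjs]⟩ hj
    · exact ⟨by rintro rfl; exact hjs hcs, by simp [hψ, hjs]⟩
  · have hjs : j ∉ s := fun hjs => hjc (hpath j hjs hj)
    simp [hψ, hjs]

theorem exists_forall_ne_mem_range_sum_le {σ : ι ↪ κ} (hσ : σ ∈ oas A) (φ : ι ↪ κ) {k : ι}
    (hk : φ k ∉ Set.range σ) :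
    ∃ ψ : ι ↪ κ, ψ k = φ k ∧ (∀ j ≠ k, ψ j ∈ Set.range σ) ∧
      ∑ j, A (φ j) j ≤ ∑ j, A (ψ j) j := by
  classical
  let outside (ψ : ι ↪ κ) : Finset ι := {j | j ≠ k ∧ ψ j ∉ Set.range σ}
  obtain ⟨ψ, hψ, hmin⟩ :=
    Finset.exists_min_image {ψ : ι ↪ κ | ψ k = φ k ∧ ∑ j, A (φ j) j ≤ ∑ j, A (ψ j) j}
      (fun ψ => (outside ψ).card) ⟨φ, by simp⟩
  simp only [Finset.mem_filter, Finset.mem_univ, true_and, and_imp] at hψ hmin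
  refine ⟨ψ, hψ.1, fun c hck => ?_, hψ.2⟩
  by_contra hc
  obtain ⟨ψ', hsum, hout, hkeep⟩ := exists_exchange hσ ψ hc
  have hψ'k : ψ' k = φ k := (hkeep k hck.symm (hψ.1 ▸ hk)).trans hψ.1
  have hlt : outside ψ' ⊂ outside ψ := by
    refine (Finset.ssubset_iff_of_subset fun j hj => ?_).2 ⟨c, ?_, ?_⟩
    · simp only [outside, Finset.mem_filter, Finset.mem_univ, true_and] at hj ⊢
      exact ⟨hj.1, (hout j hj.2).2 ▸ hj.2⟩
    · exact Finset.mem_filter.2 ⟨Finset.mem_univ _, hck, hc⟩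
    · simp only [outside, Finset.mem_filter, Finset.mem_univ, true_and, not_and, not_not]
      exact fun _ => by_contra fun h => (hout c h).1 rfl
  exact (hmin ψ' hψ'k (hψ.2.trans hsum)).not_gt (Finset.card_lt_card hlt)

end Assignment

section TopBlock

variable {n d : ℕ} (hdn : d ≤ n) (A : Matrix (Fin n) (Fin d) ℝ)

theorem mpPerm_submatrix_castLE (hopt : Fin.castLEEmb hdn ∈ oas A) :
    mpPerm (A.submatrix (Fin.castLE hdn) id) = mpPerm A := by
  have : Nonempty (Fin d ↪ Fin d) := ⟨.refl _⟩
  refine le_antisymm (mpPerm_submatrix_le A (Fin.castLEEmb hdn)) ?_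
  rw [← hopt]
  exact sum_le_mpPerm (A.submatrix (Fin.castLE hdn) id) (Embedding.refl _)

omit hdn in
theorem exists_sum_le_mpPermDel (M : Matrix (Fin d) (Fin d) ℝ) (k : Fin d)
    (ψ : {c // c ≠ k} ↪ Fin d) : ∃ j, ∑ c, M (ψ c) c ≤ mpPermDel M j k := by
  obtain ⟨j, hj⟩ : ∃ j, ∀ c, ψ c ≠ j := by
    by_contra! h
    exact (Fintype.card_le_of_surjective ψ h).not_gt
      (Fintype.card_subtype_lt (p := (· ≠ k)) (x := k) (not_not.2 rfl))
  exact ⟨j, sum_le_mpPerm (M.submatrix (fun r : {r // r ≠ j} => (r : Fin d))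
    (fun c : {c // c ≠ k} => (c : Fin d)))
    ⟨fun c => ⟨ψ c, hj c⟩, fun a b h => ψ.injective (congrArg Subtype.val h)⟩⟩

theorem sum_eq_add_sum_submatrix_castLE (χ : Fin d → Fin n) (k : Fin d)
    (g : {c // c ≠ k} → Fin d) (hg : ∀ c : {c // c ≠ k}, χ c = Fin.castLE hdn (g c)) :
    ∑ c, A (χ c) c = A (χ k) k + ∑ c, A.submatrix (Fin.castLE hdn) id (g c) c := by
  rw [Fintype.sum_eq_add_sum_subtype_ne _ k]
  simp [hg]

theorem add_mpPermDel_le_mpPermOb {i : Fin n} (hi : d ≤ i) (j k : Fin d) :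
    A i k + mpPermDel (A.submatrix (Fin.castLE hdn) id) j k ≤ mpPermOb A i := by
  set M := A.submatrix (Fin.castLE hdn) id
  have : Nonempty ({c // c ≠ k} ↪ {r // r ≠ j}) :=
    Embedding.nonempty_of_card_le (by simp [Fintype.card_subtype_compl])
  obtain ⟨ψ, hψ⟩ := exists_mem_oas (M.submatrix (fun r : {r // r ≠ j} => (r : Fin d))
    (fun c : {c // c ≠ k} => (c : Fin d)))
  let e : {c // c ≠ k} ↪ Fin n := (ψ.trans (Embedding.subtype _)).trans (Fin.castLEEmb hdn)
  have he : i ∉ Set.range e := by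
    rintro ⟨c, rfl⟩
    exact (ψ c).1.isLt.not_ge hi
  let χ : Fin d ↪ Fin n := (Equiv.optionSubtypeNe k).symm.toEmbedding.trans (e.optionElim i he)
  have hχk : χ k = i := by simp [χ]
  calc A i k + mpPermDel M j k = ∑ c, A (χ c) c := by
        rw [sum_eq_add_sum_submatrix_castLE hdn A χ k (fun c => ψ c)
          (fun c => by simp [χ, e, c.2]), hχk, mpPermDel, ← hψ]
        rfl
    _ ≤ mpPermOb A i := sum_le_mpPermOb A χ ⟨k, hχk⟩

theorem mpPermOb_le_iSup_add_mpPermDel (hopt : Fin.castLEEmb hdn ∈ oas A) [Nonempty (Fin d)]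
    {i : Fin n} (hi : d ≤ i) :
    mpPermOb A i ≤ ⨆ j, ⨆ k, (A i k + mpPermDel (A.submatrix (Fin.castLE hdn) id) j k) := by
  have hi' : i ∉ Set.range (Fin.castLEEmb hdn) := by
    simpa [Fin.range_castLE] using hi
  have : Nonempty {φ : Fin d ↪ Fin n // ∃ j, φ j = i} :=
    ⟨⟨(Fin.castLEEmb hdn).setValue (Classical.arbitrary _) i, _, Embedding.setValue_eq _ _ _⟩⟩
  refine ciSup_le fun ⟨φ, k, hk⟩ => ?_
  obtain ⟨ψ, hψk, hψ, hsum⟩ := exists_forall_ne_mem_range_sum_le hopt φ (k := k) (hk ▸ hi')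
  have hlt : ∀ c : {c // c ≠ k}, (ψ c : ℕ) < d := fun c => by
    simpa [Fin.range_castLE] using hψ c c.2
  let g : {c // c ≠ k} ↪ Fin d :=
    ⟨fun c => (ψ c).castLT (hlt c), fun a b h =>
      Subtype.ext (ψ.injective (Fin.ext (by simpa using congrArg Fin.val h)))⟩
  obtain ⟨j, hj⟩ := exists_sum_le_mpPermDel (A.submatrix (Fin.castLE hdn) id) k g
  calc ∑ c, A (φ c) c ≤ ∑ c, A (ψ c) c := hsum
    _ = A i k + ∑ c, A.submatrix (Fin.castLE hdn) id (g c) c := by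
        rw [sum_eq_add_sum_submatrix_castLE hdn A ψ k g (fun c => rfl), hψk, hk]
    _ ≤ A i k + mpPermDel (A.submatrix (Fin.castLE hdn) id) j k := by gcongr
    _ ≤ _ := le_ciSup_of_le (Set.finite_range _).bddAbove j
        (le_ciSup (f := fun k => A i k + mpPermDel _ j k) (Set.finite_range _).bddAbove k)

theorem mpPermOb_eq_iSup_add_mpPermDel (hopt : Fin.castLEEmb hdn ∈ oas A) [Nonempty (Fin d)]
    {i : Fin n} (hi : d ≤ i) :
    mpPermOb A i = ⨆ j, ⨆ k, (A i k + mpPermDel (A.submatrix (Fin.castLE hdn) id) j k) :=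
  (mpPermOb_le_iSup_add_mpPermDel hdn A hopt hi).antisymm
    (ciSup_le fun j => ciSup_le fun k => add_mpPermDel_le_mpPermOb hdn A hi j k)

end TopBlock

/-- If the identity injection `j ↦ j` is an optimal assignment of an `n×d`
max-plus matrix `𝒜` (`n ≥ d`) and `ℳ` is the top `d×d` block, then the max-plus
statistical leverage scores satisfy `p_i(𝒜) = 0` for the first `d` rows and
`p_i(𝒜) = 2 max_{j,k} (𝒜_{ik} + (ℳ^{⊗-1})_{kj})` for the remaining rows. -/
theorem mpScore_formula (n d : ℕ) (hdn : d ≤ n) (A : Matrix (Fin n) (Fin d) ℝ)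
    (hopt : Fin.castLEEmb hdn ∈ oas A) :
    ∀ i : Fin n,
      ((i : ℕ) < d → mpScore A i = 0) ∧
      (d ≤ (i : ℕ) → mpScore A i =
        2 * (⨆ j : Fin d, ⨆ k : Fin d,
          (A i k + mpInv (A.submatrix (Fin.castLE hdn) (id : Fin d → Fin d)) k j))) := by
  intro i
  refine ⟨fun hi => ?_, fun hi => ?_⟩
  · rw [mpScore, mpPermOb_eq_mpPerm A hopt (i := i) ⟨⟨i, hi⟩, rfl⟩, sub_self, mul_zero]
  rcases isEmpty_or_nonempty (Fin d) with hd | hd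
  · simp [mpScore, mpPermOb, mpPerm]
  have hbdd (f : Fin d → ℝ) : BddAbove (Set.range f) := (Set.finite_range f).bddAbove
  simp only [mpInv, mpPerm_submatrix_castLE hdn A hopt, ← add_sub_assoc, ← ciSup_sub (hbdd _)]
  rw [mpScore, mpPermOb_eq_iSup_add_mpPermDel hdn A hopt hi]
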